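/- Suppose that n and m are natural numbers satisfying m ≥ n/2 + 30, and θ₁, …, θₙ are any n (not necessarily distinct) angles, each strictly between 0 and π. Then the tuple (θ₁, …, θₙ) can be realised with multiplicity by a set of m points in the plane. -/

import Mathlib

open EuclideanGeometry

/-- A set `P` of points realises the angle `θ` if some three points of `P`
form this angle. -/
def Realises {d : ℕ} (P : Set (EuclideanSpace ℝ (Fin d))) (θ : ℝ) : Prop :=
  ∃ A B C : EuclideanSpace ℝ (Fin d),
    A ∈ P ∧ B ∈ P ∧ C ∈ P ∧ A ≠ B ∧ C ≠ B ∧ EuclideanGeometry.angle A B C = θ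

/-- The ray from `B` towards `A`, encoded by its vertex together with the
unit vector in its direction. -/
noncomputable def rayOf {d : ℕ} (B A : EuclideanSpace ℝ (Fin d)) :
    EuclideanSpace ℝ (Fin d) × EuclideanSpace ℝ (Fin d) :=
  (B, ‖A - B‖⁻¹ • (A - B))

/-- A tuple `θ` of angles is realised with multiplicity by `P` if each `θ i` is
realised at some vertex `B i` by points `A i, C i` of `P`, with the unordered
pairs of rays pairwise distinct. -/
def RealisesMult {d n : ℕ} (P : Set (EuclideanSpace ℝ (Fin d))) (θ : Fin n → ℝ) : Prop :=
  ∃ A B C : Fin n → EuclideanSpace ℝ (Fin d),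
    (∀ i, A i ∈ P ∧ B i ∈ P ∧ C i ∈ P ∧ A i ≠ B i ∧ C i ≠ B i ∧
      EuclideanGeometry.angle (A i) (B i) (C i) = θ i) ∧
    Function.Injective fun i =>
      ({rayOf (B i) (A i), rayOf (B i) (C i)} :
        Set (EuclideanSpace ℝ (Fin d) × EuclideanSpace ℝ (Fin d)))

/-!
Equal angles are paired. For a value `v ≠ π/2` occurring `c` times, `c / 2` edges of a zigzag
between the lines `y = 0` and `y = 1` each realise `v` twice, once at each endpoint, against a
horizontal ray towards a far point on that line. Every edge leans to the right (an obtuse `v` is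
measured against the leftward ray), so the vertices move strictly to the right and all these ray
pairs differ. Right angles come four at a time from vertical rungs placed to the right of the
zigzag. What is left is one angle for each value of odd multiplicity; these are distinct, and
pairing them as `α < β`, each pair is realised at the base points `(0, -1)` and `(1, -1)` by one
apex (law of sines). A ray pair determines its angle, so it suffices to count distinct ray pairs
value by value; the construction uses at most `n / 2 + 10` points.
-/

open Real

section RayPairs

variable {d : ℕ}

def rayPairs (P : Set (EuclideanSpace ℝ (Fin d))) (v : ℝ) :
    Set (Set (EuclideanSpace ℝ (Fin d) × EuclideanSpace ℝ (Fin d))) :=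
  {S | ∃ A B C, A ∈ P ∧ B ∈ P ∧ C ∈ P ∧ A ≠ B ∧ C ≠ B ∧ angle A B C = v ∧
    S = {rayOf B A, rayOf B C}}

lemma rayPairs_mono {P Q : Set (EuclideanSpace ℝ (Fin d))} (hPQ : P ⊆ Q) (v : ℝ) :
    rayPairs P v ⊆ rayPairs Q v := by
  rintro S ⟨A, B, C, hA, hB, hC, hAB, hCB, hv, rfl⟩
  exact ⟨A, B, C, hPQ hA, hPQ hB, hPQ hC, hAB, hCB, hv, rfl⟩

lemma angle_eq_angle_rayOf {A B C : EuclideanSpace ℝ (Fin d)} (hAB : A ≠ B) (hCB : C ≠ B) :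
    angle A B C = InnerProductGeometry.angle (rayOf B A).2 (rayOf B C).2 := by
  rw [angle, rayOf, rayOf, InnerProductGeometry.angle_smul_left_of_pos _ _
    (inv_pos.2 (norm_pos_iff.2 (sub_ne_zero.2 hAB))),
    InnerProductGeometry.angle_smul_right_of_pos _ _
    (inv_pos.2 (norm_pos_iff.2 (sub_ne_zero.2 hCB)))]
  rfl

lemma eq_of_mem_rayPairs {P Q : Set (EuclideanSpace ℝ (Fin d))} {S} {v v' : ℝ}
    (h : S ∈ rayPairs P v) (h' : S ∈ rayPairs Q v') : v = v' := by
  obtain ⟨A, B, C, -, -, -, hAB, hCB, rfl, rfl⟩ := h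
  obtain ⟨A', B', C', -, -, -, hAB', hCB', rfl, hS⟩ := h'
  rw [angle_eq_angle_rayOf hAB hCB, angle_eq_angle_rayOf hAB' hCB']
  rcases Set.pair_eq_pair_iff.1 hS with ⟨h1, h2⟩ | ⟨h1, h2⟩
  · rw [h1, h2]
  · rw [h1, h2, InnerProductGeometry.angle_comm]

theorem realisesMult_of_encard_le {n : ℕ} {P : Set (EuclideanSpace ℝ (Fin d))} {θ : Fin n → ℝ}
    (h : ∀ v, {i | θ i = v}.encard ≤ (rayPairs P v).encard) : RealisesMult P θ := by
  choose f hmaps hinj using fun v => (Set.toFinite {i | θ i = v}).exists_injOn_of_encard_le (h v)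
  have hS : ∀ i, f (θ i) i ∈ rayPairs P (θ i) := fun i => hmaps (θ i) rfl
  choose A B C hA hB hC hAB hCB hv hABC using fun i => hS i
  refine ⟨A, B, C, fun i => ⟨hA i, hB i, hC i, hAB i, hCB i, hv i⟩, fun i j hij => ?_⟩
  simp only [← hABC] at hij
  have hθ : θ i = θ j := eq_of_mem_rayPairs (hS i) (hij ▸ hS j)
  exact hinj (θ i) rfl (by simp [hθ]) (by rw [hij, hθ])

lemma card_le_encard_rayPairs {ι : Type*} [Fintype ι] {P : Set (EuclideanSpace ℝ (Fin d))}
    {v : ℝ} {f : ι → Set (EuclideanSpace ℝ (Fin d) × EuclideanSpace ℝ (Fin d))}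
    (hf : Function.Injective f) (hmem : ∀ i, f i ∈ rayPairs P v) :
    (Fintype.card ι : ℕ∞) ≤ (rayPairs P v).encard := by
  rw [← ENat.card_eq_coe_fintype_card, ← Set.encard_univ, ← hf.encard_image]
  exact Set.encard_le_encard (Set.image_subset_iff.2 fun i _ => hmem i)

lemma RealisesMult.mono {n : ℕ} {P Q : Set (EuclideanSpace ℝ (Fin d))} {θ : Fin n → ℝ}
    (h : RealisesMult P θ) (hPQ : P ⊆ Q) : RealisesMult Q θ := by
  obtain ⟨A, B, C, hABC, hinj⟩ := h
  exact ⟨A, B, C, fun i => let ⟨hA, hB, hC, h⟩ := hABC i; ⟨hPQ hA, hPQ hB, hPQ hC, h⟩, hinj⟩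

lemma rayOf_add_smul (B : EuclideanSpace ℝ (Fin d)) {u : EuclideanSpace ℝ (Fin d)} {t : ℝ}
    (hu : ‖u‖ = 1) (ht : 0 < t) : rayOf B (B + t • u) = (B, u) := by
  simp [rayOf, norm_smul, hu, abs_of_pos ht, smul_smul, ht.ne']

lemma insert_mem_rayPairs {P : Set (EuclideanSpace ℝ (Fin d))}
    {B u w : EuclideanSpace ℝ (Fin d)} {t r : ℝ} (hu : ‖u‖ = 1) (hw : ‖w‖ = 1) (ht : 0 < t)
    (hr : 0 < r) (hB : B ∈ P) (hA : B + t • u ∈ P) (hC : B + r • w ∈ P) :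
    {(B, u), (B, w)} ∈ rayPairs P (InnerProductGeometry.angle u w) := by
  have hne : ∀ {s : ℝ} {x : EuclideanSpace ℝ (Fin d)}, 0 < s → ‖x‖ = 1 → B + s • x ≠ B :=
    fun hs hx h => by simp_all [hs.ne']
  refine ⟨_, B, _, hA, hB, hC, hne ht hu, hne hr hw, ?_, by
    rw [rayOf_add_smul B hu ht, rayOf_add_smul B hw hr]⟩
  simp [angle, InnerProductGeometry.angle_smul_left_of_pos _ _ ht,
    InnerProductGeometry.angle_smul_right_of_pos _ _ hr]

end RayPairs

section Plane

local notation "ℝ²" => EuclideanSpace ℝ (Fin 2)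

@[simp] lemma vec2_add (a b c d : ℝ) : !₂[a, b] + !₂[c, d] = !₂[a + c, b + d] := by
  ext i; fin_cases i <;> simp

@[simp] lemma vec2_smul (t a b : ℝ) : t • !₂[a, b] = !₂[t * a, t * b] := by
  ext i; fin_cases i <;> simp

lemma inner_vec2 (a b c d : ℝ) : inner ℝ !₂[a, b] !₂[c, d] = a * c + b * d := by
  simp [EuclideanSpace.inner_eq_star_dotProduct]
  ring

lemma norm_vec2 {a b : ℝ} (h : a ^ 2 + b ^ 2 = 1) : ‖!₂[a, b]‖ = 1 := by
  simp [EuclideanSpace.norm_eq, Fin.sum_univ_two, h]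

lemma sign_eq_one_or_neg_one {a : ℝ} (ha : a ≠ 0) :
    (SignType.sign a : ℝ) = 1 ∨ (SignType.sign a : ℝ) = -1 := by
  rcases ha.lt_or_gt with h | h
  · simp [sign_neg h]
  · simp [sign_pos h]

def horizCorner (B : ℝ²) (h p q : ℝ) : Set (ℝ² × ℝ²) := {(B, !₂[h, 0]), (B, !₂[p, q])}

lemma horizCorner_inj {B B' : ℝ²} {h p q h' p' q' : ℝ} (hq : q ≠ 0)
    (heq : horizCorner B h p q = horizCorner B' h' p' q') :
    B = B' ∧ h = h' ∧ p = p' ∧ q = q' := by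
  rcases Set.pair_eq_pair_iff.1 heq with ⟨h1, h2⟩ | ⟨-, h2⟩ <;> simp_all

lemma horizCorner_mem_rayPairs {P : Set ℝ²} {B : ℝ²} {h p q : ℝ} (hh : h = 1 ∨ h = -1)
    (hpq : p ^ 2 + q ^ 2 = 1) (hB : B ∈ P) (hA : ∃ t : ℝ, 0 < t ∧ B + t • !₂[h, 0] ∈ P)
    (hC : ∃ r : ℝ, 0 < r ∧ B + r • !₂[p, q] ∈ P) :
    horizCorner B h p q ∈ rayPairs P (arccos (h * p)) := by
  obtain ⟨t, ht, hA⟩ := hA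
  obtain ⟨r, hr, hC⟩ := hC
  have hh' : h ^ 2 + 0 ^ 2 = 1 := by rcases hh with rfl | rfl <;> norm_num
  convert insert_mem_rayPairs (norm_vec2 hh') (norm_vec2 hpq) ht hr hB hA hC using 1
  · rw [InnerProductGeometry.angle, inner_vec2, norm_vec2 hh', norm_vec2 hpq]
    simp
  · rfl

lemma horizCorner_mem_rayPairs_of_segment {P : Set ℝ²} {B C : ℝ²} {h p q r : ℝ}
    (hh : h = 1 ∨ h = -1) (hpq : p ^ 2 + q ^ 2 = 1) (hr : 0 < r) (hBC : C = B + r • !₂[p, q])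
    (hB : B ∈ P) (hC : C ∈ P) (hAB : ∃ t : ℝ, 0 < t ∧ B + t • !₂[h, 0] ∈ P)
    (hAC : ∃ t : ℝ, 0 < t ∧ C + t • !₂[-h, 0] ∈ P) :
    horizCorner B h p q ∈ rayPairs P (arccos (h * p)) ∧
      horizCorner C (-h) (-p) (-q) ∈ rayPairs P (arccos (h * p)) := by
  refine ⟨horizCorner_mem_rayPairs hh hpq hB hAB ⟨r, hr, hBC ▸ hC⟩, ?_⟩
  have hCB : C + r • !₂[-p, -q] = B := by
    rw [hBC]; ext i; fin_cases i <;> simp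
  simpa using horizCorner_mem_rayPairs (h := -h) (p := -p) (q := -q)
    (by rcases hh with rfl | rfl <;> norm_num) (by linear_combination hpq) hC hAC
    ⟨r, hr, hCB ▸ hB⟩

end Plane

noncomputable section TwoLines

local notation "ℝ²" => EuclideanSpace ℝ (Fin 2)

variable (w : ℕ → ℝ) (K R : ℕ)

def zigX (e : ℕ) : ℝ := ∑ j ∈ Finset.range e, |cot (w j)|

def zigPt (e : ℕ) : ℝ² := !₂[zigX w e, (e % 2 : ℕ)]

def rungPt (j : ℕ) (top : Bool) : ℝ² := !₂[zigX w K + 1 + j, top.toNat]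

def twoLinePts : Finset ℝ² :=
  (Finset.range (K + 1)).image (zigPt w) ∪
    (Finset.range R ×ˢ Finset.univ).image (fun x => rungPt w K x.1 x.2) ∪
    {!₂[-1, 0], !₂[-1, 1], !₂[zigX w K + R + 1, 0], !₂[zigX w K + R + 1, 1]}

/-- The edge from `zigPt w e` to `zigPt w (e + 1)` has direction `(|cos|, ±sin)` of `w e`; against
the horizontal ray of direction `sign (cos (w e))` at its start, and the opposite one at its end,
it makes the angle `w e`. -/
def zigCorner (e : ℕ) (atEnd : Bool) : Set (ℝ² × ℝ²) :=
  let h : ℝ := SignType.sign (cos (w e))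
  let p := |cos (w e)|
  let q := (-1) ^ e * sin (w e)
  if atEnd then horizCorner (zigPt w (e + 1)) (-h) (-p) (-q) else horizCorner (zigPt w e) h p q

def rungCorner (j : ℕ) (top left : Bool) : Set (ℝ² × ℝ²) :=
  horizCorner (rungPt w K j top) (if left then -1 else 1) 0 (if top then -1 else 1)

variable {w K R}

lemma cos_ne_zero_of_mem_Ioo {v : ℝ} (hv : v ∈ Set.Ioo 0 π) (hv' : v ≠ π / 2) : cos v ≠ 0 :=
  fun h => hv' <| injOn_cos ⟨hv.1.le, hv.2.le⟩ ⟨by positivity, by linarith [pi_pos]⟩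
    (h.trans cos_pi_div_two.symm)

lemma zigX_nonneg (e : ℕ) : 0 ≤ zigX w e :=
  Finset.sum_nonneg fun _ _ => abs_nonneg _

lemma zigX_lt (hw : ∀ e < K, w e ∈ Set.Ioo 0 π ∧ w e ≠ π / 2) {e e' : ℕ} (hee' : e < e')
    (he' : e' ≤ K) : zigX w e < zigX w e' := by
  rw [zigX, zigX, ← Finset.sum_range_add_sum_Ico _ hee'.le, lt_add_iff_pos_right]
  refine Finset.sum_pos (fun j hj => abs_pos.2 ?_) (Finset.nonempty_Ico.2 hee')
  obtain ⟨hj, hj'⟩ := hw j (by simp at hj; omega)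
  rw [cot_eq_cos_div_sin]
  exact div_ne_zero (cos_ne_zero_of_mem_Ioo hj hj') (sin_pos_of_pos_of_lt_pi hj.1 hj.2).ne'

lemma zigX_le (hw : ∀ e < K, w e ∈ Set.Ioo 0 π ∧ w e ≠ π / 2) {e : ℕ} (he : e ≤ K) :
    zigX w e ≤ zigX w K := by
  rcases he.lt_or_eq with he | rfl
  · exact (zigX_lt hw he le_rfl).le
  · exact le_rfl

lemma zigPt_injOn (hw : ∀ e < K, w e ∈ Set.Ioo 0 π ∧ w e ≠ π / 2) {e e' : ℕ} (he : e ≤ K)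
    (he' : e' ≤ K) (heq : zigPt w e = zigPt w e') : e = e' := by
  have hX : zigX w e = zigX w e' := by simpa [zigPt] using congrArg (· 0) heq
  rcases lt_trichotomy e e' with h | h | h
  · exact absurd hX (zigX_lt hw h he').ne
  · exact h
  · exact absurd hX.symm (zigX_lt hw h he).ne

lemma zigPt_succ (e : ℕ) (hv : w e ∈ Set.Ioo 0 π) :
    zigPt w (e + 1) = zigPt w e + (sin (w e))⁻¹ • !₂[|cos (w e)|, (-1) ^ e * sin (w e)] := by
  have hs := sin_pos_of_pos_of_lt_pi hv.1 hv.2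
  have hy : (((e + 1) % 2 : ℕ) : ℝ) = (e % 2 : ℕ) + (-1) ^ e := by
    rcases Nat.even_or_odd e with h | h
    · simp [h.neg_one_pow, Nat.even_iff.1 h, Nat.add_mod]
    · simp [h.neg_one_pow, Nat.odd_iff.1 h, Nat.add_mod]
  simp only [zigPt, zigX, Finset.sum_range_succ, vec2_smul, vec2_add, hy, cot_eq_cos_div_sin,
    abs_div, abs_of_pos hs]
  congr 2 <;> field_simp

lemma zigPt_mem_twoLinePts {e : ℕ} (he : e ≤ K) : zigPt w e ∈ twoLinePts w K R := by
  simp only [twoLinePts, Finset.mem_union, Finset.mem_image, Finset.mem_range]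
  exact Or.inl (Or.inl ⟨e, by omega, rfl⟩)

lemma rungPt_mem_twoLinePts {j : ℕ} (hj : j < R) (top : Bool) :
    rungPt w K j top ∈ twoLinePts w K R := by
  simp only [twoLinePts, Finset.mem_union, Finset.mem_image, Finset.mem_range, Finset.mem_product]
  exact Or.inl (Or.inr ⟨(j, top), by simpa using hj, rfl⟩)

lemma exists_horizontal_ray_mem_twoLinePts {x : ℝ} {y : ℕ} {h : ℝ} (hx : -1 < x)
    (hxR : x < zigX w K + R + 1) (hy : y < 2) (hh : h = 1 ∨ h = -1) :
    ∃ t : ℝ, 0 < t ∧ !₂[x, y] + t • !₂[h, 0] ∈ twoLinePts w K R := by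
  have hy' : (y : ℝ) = 0 ∨ (y : ℝ) = 1 := by interval_cases y <;> simp
  rcases hh with rfl | rfl
  · refine ⟨zigX w K + R + 1 - x, by linarith, ?_⟩
    rcases hy' with hy' | hy' <;> simp [twoLinePts, hy']
  · refine ⟨x + 1, by linarith, ?_⟩
    rcases hy' with hy' | hy' <;> simp [twoLinePts, hy']

lemma exists_horizontal_ray_from_zigPt (hw : ∀ e < K, w e ∈ Set.Ioo 0 π ∧ w e ≠ π / 2) {e : ℕ}
    (he : e ≤ K) {h : ℝ} (hh : h = 1 ∨ h = -1) :
    ∃ t : ℝ, 0 < t ∧ zigPt w e + t • !₂[h, 0] ∈ twoLinePts w K R :=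
  exists_horizontal_ray_mem_twoLinePts (by linarith [zigX_nonneg (w := w) e])
    (by linarith [zigX_le hw he, (R.cast_nonneg : (0 : ℝ) ≤ R)]) (Nat.mod_lt _ two_pos) hh

lemma zigCorner_mem_rayPairs (hw : ∀ e < K, w e ∈ Set.Ioo 0 π ∧ w e ≠ π / 2) {e : ℕ}
    (he : e < K) (atEnd : Bool) : zigCorner w e atEnd ∈ rayPairs (twoLinePts w K R) (w e) := by
  obtain ⟨hv, hv'⟩ := hw e he
  have hh := sign_eq_one_or_neg_one (cos_ne_zero_of_mem_Ioo hv hv')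
  have hpq : |cos (w e)| ^ 2 + ((-1) ^ e * sin (w e)) ^ 2 = 1 := by
    rw [sq_abs, mul_pow, ← pow_mul, mul_comm e, pow_mul]; simp [cos_sq_add_sin_sq]
  have hangle : arccos (SignType.sign (cos (w e)) * |cos (w e)|) = w e := by
    rw [sign_mul_abs, arccos_cos hv.1.le hv.2.le]
  obtain ⟨h0, h1⟩ := horizCorner_mem_rayPairs_of_segment hh hpq
    (inv_pos.2 (sin_pos_of_pos_of_lt_pi hv.1 hv.2)) (zigPt_succ e hv)
    (zigPt_mem_twoLinePts he.le) (zigPt_mem_twoLinePts he)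
    (exists_horizontal_ray_from_zigPt hw he.le hh)
    (exists_horizontal_ray_from_zigPt hw he (by rcases hh with hh | hh <;> simp [hh]))
  rw [hangle] at h0 h1
  cases atEnd
  · exact h0
  · exact h1

lemma zigCorner_injOn (hw : ∀ e < K, w e ∈ Set.Ioo 0 π ∧ w e ≠ π / 2) :
    Set.InjOn (fun x : ℕ × Bool => zigCorner w x.1 x.2) {x | x.1 < K} := by
  rintro ⟨e, b⟩ (he : e < K) ⟨e', b'⟩ (he' : e' < K) heq
  obtain ⟨hv, hv'⟩ := hw e he
  obtain ⟨hw', hw''⟩ := hw e' he'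
  have hq : ∀ s : ℝ, s = 1 ∨ s = -1 → s * ((-1) ^ e * sin (w e)) ≠ 0 := fun s hs =>
    mul_ne_zero (by rcases hs with rfl | rfl <;> norm_num)
      (mul_ne_zero (pow_ne_zero _ (by norm_num)) (sin_pos_of_pos_of_lt_pi hv.1 hv.2).ne')
  have hc := abs_pos.2 (cos_ne_zero_of_mem_Ioo hv hv')
  have hc' := abs_pos.2 (cos_ne_zero_of_mem_Ioo hw' hw'')
  cases b <;> cases b' <;> simp only [zigCorner] at heq
  · obtain ⟨hB, -⟩ := horizCorner_inj (by simpa using hq 1 (by simp)) heq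
    simp [zigPt_injOn hw he.le he'.le hB]
  · obtain ⟨-, -, hp, -⟩ := horizCorner_inj (by simpa using hq 1 (by simp)) heq
    linarith
  · obtain ⟨-, -, hp, -⟩ := horizCorner_inj (by simpa using hq (-1) (by simp)) heq
    linarith
  · obtain ⟨hB, -⟩ := horizCorner_inj (by simpa using hq (-1) (by simp)) heq
    have := zigPt_injOn hw he he' hB
    simp only [Prod.mk.injEq, and_true]; omega

lemma zigCorner_ne_horizCorner (e : ℕ) (atEnd : Bool) {x h p q : ℝ} (hq : q ≠ 0) :
    zigCorner w e atEnd ≠ horizCorner !₂[x, -1] h p q := by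
  have key : ∀ k : ℕ, ∀ {h' p' q' : ℝ},
      horizCorner (zigPt w k) h' p' q' ≠ horizCorner !₂[x, -1] h p q := fun k _ _ _ heq => by
    have := congrArg (· 1) (horizCorner_inj hq heq.symm).1
    simp [zigPt] at this
    linarith [(k % 2).cast_nonneg (α := ℝ)]
  cases atEnd
  · exact key e
  · exact key (e + 1)

lemma rungCorner_mem_rayPairs {j : ℕ} (hj : j < R) (top left : Bool) :
    rungCorner w K j top left ∈ rayPairs (twoLinePts w K R) (π / 2) := by
  have hx : -1 < zigX w K + 1 + j ∧ zigX w K + 1 + j < zigX w K + R + 1 := by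
    have : (j : ℝ) < R := by exact_mod_cast hj
    constructor <;> linarith [zigX_nonneg (w := w) K, (j.cast_nonneg : (0 : ℝ) ≤ j)]
  have hother : rungPt w K j top + (1 : ℝ) • !₂[0, if top then -1 else 1] = rungPt w K j !top := by
    cases top <;> simp [rungPt]
  simpa [rungCorner] using horizCorner_mem_rayPairs (p := 0) (by cases left <;> simp)
    (by cases top <;> simp) (rungPt_mem_twoLinePts hj top)
    (exists_horizontal_ray_mem_twoLinePts hx.1 hx.2 (by cases top <;> simp)
      (by cases left <;> simp))
    ⟨1, one_pos, hother ▸ rungPt_mem_twoLinePts hj !top⟩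

lemma rungCorner_injOn :
    Set.InjOn (fun x : ℕ × Bool × Bool => rungCorner w K x.1 x.2.1 x.2.2) {x | x.1 < R} := by
  rintro ⟨j, top, left⟩ - ⟨j', top', left'⟩ - heq
  obtain ⟨hB, hh, -⟩ := horizCorner_inj (by cases top <;> simp) heq
  simp only [rungPt, WithLp.toLp.injEq, Matrix.vecCons_inj, add_right_inj, Nat.cast_inj,
    and_true] at hB
  obtain ⟨rfl, hb⟩ := hB
  obtain rfl : top = top' := by cases top <;> cases top' <;> simp_all
  obtain rfl : left = left' := by cases left <;> cases left' <;> norm_num at hh <;> rfl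
  rfl

lemma card_twoLinePts : (twoLinePts w K R).card ≤ K + 2 * R + 5 := by
  have h4 : ({!₂[-1, 0], !₂[-1, 1], !₂[zigX w K + R + 1, 0], !₂[zigX w K + R + 1, 1]} :
      Finset ℝ²).card ≤ 4 := Finset.card_le_four
  have hz := (Finset.range (K + 1)).card_image_le (f := zigPt w)
  have hr := (Finset.range R ×ˢ (Finset.univ : Finset Bool)).card_image_le
    (f := fun x => rungPt w K x.1 x.2)
  simp only [Finset.card_product, Finset.card_range, Finset.card_univ, Fintype.card_bool] at hz hr
  grw [twoLinePts, Finset.card_union_le, Finset.card_union_le]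
  omega

end TwoLines

noncomputable section Fan

local notation "ℝ²" => EuclideanSpace ℝ (Fin 2)

def fanBase : Finset ℝ² := {!₂[0, -1], !₂[1, -1], !₂[2, -1]}

def fanApex (α β : ℝ) : ℝ² := !₂[0, -1] + (sin β / sin (β - α)) • !₂[cos α, sin α]

lemma fanCorner_mem_rayPairs {P : Set ℝ²} {v x r : ℝ} (hv : v ∈ Set.Ioo 0 π) (hr : 0 < r)
    (hB : !₂[x, -1] ∈ P) (hA : !₂[x + 1, -1] ∈ P) (hC : !₂[x, -1] + r • !₂[cos v, sin v] ∈ P) :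
    horizCorner !₂[x, -1] 1 (cos v) (sin v) ∈ rayPairs P v := by
  simpa [arccos_cos hv.1.le hv.2.le] using horizCorner_mem_rayPairs (Or.inl rfl)
    (cos_sq_add_sin_sq v) hB ⟨1, one_pos, by simpa using hA⟩ ⟨r, hr, hC⟩

/-- The law of sines in the triangle `(0, -1)`, `(1, -1)`, `fanApex α β`. -/
lemma fanApex_eq {α β : ℝ} (hα : 0 < α) (hαβ : α < β) (hβ : β < π) :
    fanApex α β = !₂[1, -1] + (sin α / sin (β - α)) • !₂[cos β, sin β] := by
  have hs : sin (β - α) ≠ 0 := (sin_pos_of_pos_of_lt_pi (by linarith) (by linarith)).ne'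
  simp only [fanApex, vec2_smul, vec2_add]
  congr 2
  · field_simp
    rw [sin_sub]; ring
  · field_simp

lemma fanApex_corners_mem_rayPairs {P : Set ℝ²} {α β : ℝ} (hα : 0 < α) (hαβ : α < β)
    (hβ : β < π) (hbase : ↑fanBase ⊆ P) (hapex : fanApex α β ∈ P) :
    horizCorner !₂[0, -1] 1 (cos α) (sin α) ∈ rayPairs P α ∧
      horizCorner !₂[1, -1] 1 (cos β) (sin β) ∈ rayPairs P β := by
  have hsin : 0 < sin (β - α) := sin_pos_of_pos_of_lt_pi (by linarith) (by linarith)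
  have hbase' : ∀ x ∈ fanBase, x ∈ P := fun x hx => hbase hx
  refine ⟨fanCorner_mem_rayPairs ⟨hα, by linarith⟩
    (div_pos (sin_pos_of_pos_of_lt_pi (by linarith) hβ) hsin) (hbase' _ (by simp [fanBase]))
    (hbase' _ (by simp [fanBase])) hapex, ?_⟩
  exact fanCorner_mem_rayPairs ⟨by linarith, hβ⟩
    (div_pos (sin_pos_of_pos_of_lt_pi hα (by linarith)) hsin) (hbase' _ (by simp [fanBase]))
    (hbase' _ (by norm_num [fanBase])) (fanApex_eq hα hαβ hβ ▸ hapex)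

theorem exists_fan (S : Finset ℝ) (hS : ∀ v ∈ S, v ∈ Set.Ioo 0 π) :
    ∃ F : Finset ℝ², 2 * F.card ≤ S.card + 1 ∧
      ∀ v ∈ S, ∃ x : ℝ, horizCorner !₂[x, -1] 1 (cos v) (sin v) ∈ rayPairs ↑(fanBase ∪ F) v := by
  induction S using Finset.strongInduction with
  | H S ih =>
  rcases S.eq_empty_or_nonempty with rfl | hne
  · exact ⟨∅, by simp, by simp⟩
  set α := S.min' hne
  have hα := S.min'_mem hne
  rcases (S.erase α).eq_empty_or_nonempty with he | hne'
  · have hSα : S = {α} := by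
      simpa [hne.ne_empty] using Finset.erase_eq_empty_iff _ _ |>.1 he
    refine ⟨{!₂[0, -1] + (1 : ℝ) • !₂[cos α, sin α]}, by simp [hSα], fun v hv => ?_⟩
    rw [hSα, Finset.mem_singleton] at hv
    rw [hv]
    exact ⟨0, fanCorner_mem_rayPairs (hS _ hα) one_pos (by simp [fanBase]) (by simp [fanBase])
      (by simp)⟩
  set β := (S.erase α).min' hne'
  have hβ := (S.erase α).min'_mem hne'
  have hαβ : α < β :=
    lt_of_le_of_ne (S.min'_le _ (Finset.mem_of_mem_erase hβ)) (Finset.ne_of_mem_erase hβ).symm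
  set T := (S.erase α).erase β
  have hTS : T ⊂ S := ((S.erase α).erase_ssubset hβ).trans (S.erase_ssubset hα)
  obtain ⟨F, hF, hT⟩ := ih T hTS fun v hv => hS v (hTS.subset hv)
  have hTcard : T.card + 2 = S.card := by
    have := Finset.card_pos.2 hne'
    rw [Finset.card_erase_of_mem hα] at this
    rw [Finset.card_erase_of_mem hβ, Finset.card_erase_of_mem hα]
    omega
  obtain ⟨hα0, -⟩ := hS α hα
  obtain ⟨-, hβπ⟩ := hS β (Finset.mem_of_mem_erase hβ)
  obtain ⟨hcα, hcβ⟩ := fanApex_corners_mem_rayPairs (P := ↑(fanBase ∪ insert (fanApex α β) F))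
    hα0 hαβ hβπ (by intro; simp +contextual) (by simp)
  refine ⟨insert (fanApex α β) F, by grw [Finset.card_insert_le]; omega, fun v hv => ?_⟩
  by_cases hvα : v = α
  · exact ⟨0, hvα ▸ hcα⟩
  by_cases hvβ : v = β
  · exact ⟨1, hvβ ▸ hcβ⟩
  obtain ⟨x, hx⟩ := hT v (by simp [T, hv, hvα, hvβ])
  exact ⟨x, rayPairs_mono (by intro; simp +contextual) v hx⟩

end Fan

noncomputable section Construction

local notation "ℝ²" => EuclideanSpace ℝ (Fin 2)

variable {n : ℕ} (θ : Fin n → ℝ)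

def mult (v : ℝ) : ℕ := (Finset.univ.filter (θ · = v)).card

def ordinaryValues : Finset ℝ := (Finset.univ.filter (θ · ≠ π / 2)).image θ

def oddValues : Finset ℝ := (ordinaryValues θ).filter fun v => Odd (mult θ v)

abbrev ZigEdge : Type := Σ v : ordinaryValues θ, Fin (mult θ v / 2)

def edgeAngle (e : ℕ) : ℝ :=
  if h : e < Fintype.card (ZigEdge θ) then ((Fintype.equivFin (ZigEdge θ)).symm ⟨e, h⟩).1 else 0

def edgeCorner (v : ordinaryValues θ) (x : Fin (mult θ v / 2) × Bool) : Set (ℝ² × ℝ²) :=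
  zigCorner (edgeAngle θ) (Fintype.equivFin (ZigEdge θ) ⟨v, x.1⟩) x.2

/-- `(mult θ (π / 2) + 3) / 4` is the number of rungs, four right angles each. -/
def realisingPts (F : Finset ℝ²) : Finset ℝ² :=
  twoLinePts (edgeAngle θ) (Fintype.card (ZigEdge θ)) ((mult θ (π / 2) + 3) / 4) ∪ (fanBase ∪ F)

variable {θ}

lemma encard_eq_mult (v : ℝ) : {i | θ i = v}.encard = mult θ v := by
  rw [mult, ← Set.encard_coe_eq_coe_finsetCard]; simp

lemma mult_eq_zero {v : ℝ} (hv : v ∉ ordinaryValues θ) (hv' : v ≠ π / 2) : mult θ v = 0 := by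
  simp only [mult, Finset.card_eq_zero, Finset.filter_eq_empty_iff, Finset.mem_univ, true_implies]
  rintro i rfl
  exact hv (Finset.mem_image_of_mem _ (by simpa using hv'))

lemma ne_of_mem_ordinaryValues {v : ℝ} (hv : v ∈ ordinaryValues θ) : v ≠ π / 2 := by
  obtain ⟨i, hi, rfl⟩ := Finset.mem_image.1 hv
  exact (Finset.mem_filter.1 hi).2

lemma mem_ordinaryValues (hθ : ∀ i, θ i ∈ Set.Ioo 0 π) {v : ℝ} (hv : v ∈ ordinaryValues θ) :
    v ∈ Set.Ioo 0 π ∧ v ≠ π / 2 := by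
  obtain ⟨i, -, rfl⟩ := Finset.mem_image.1 hv
  exact ⟨hθ i, ne_of_mem_ordinaryValues hv⟩

lemma edgeAngle_equivFin (x : ZigEdge θ) : edgeAngle θ (Fintype.equivFin _ x) = x.1 := by
  rw [edgeAngle, dif_pos (Fintype.equivFin _ x).isLt]
  simp

lemma edgeAngle_mem (hθ : ∀ i, θ i ∈ Set.Ioo 0 π) :
    ∀ e < Fintype.card (ZigEdge θ), edgeAngle θ e ∈ Set.Ioo 0 π ∧ edgeAngle θ e ≠ π / 2 := by
  intro e he
  obtain ⟨x, hx⟩ := (Fintype.equivFin (ZigEdge θ)).surjective ⟨e, he⟩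
  rw [show e = Fintype.equivFin _ x by rw [hx], edgeAngle_equivFin]
  exact mem_ordinaryValues hθ x.1.2

lemma edgeCorner_injective (hθ : ∀ i, θ i ∈ Set.Ioo 0 π) (v : ordinaryValues θ) :
    Function.Injective (edgeCorner θ v) := by
  intro x y hxy
  have := zigCorner_injOn (edgeAngle_mem hθ)
    (x₁ := (Fintype.equivFin (ZigEdge θ) ⟨v, x.1⟩, x.2))
    (x₂ := (Fintype.equivFin (ZigEdge θ) ⟨v, y.1⟩, y.2)) (Fin.is_lt _) (Fin.is_lt _) hxy
  simp only [Prod.mk.injEq, Fin.val_inj, EmbeddingLike.apply_eq_iff_eq, Sigma.mk.injEq,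
    heq_eq_eq, true_and] at this
  exact Prod.ext this.1 this.2

lemma edgeCorner_mem_rayPairs (hθ : ∀ i, θ i ∈ Set.Ioo 0 π) (F : Finset ℝ²)
    (v : ordinaryValues θ) (x : Fin (mult θ v / 2) × Bool) :
    edgeCorner θ v x ∈ rayPairs (realisingPts θ F : Set ℝ²) v := by
  have := zigCorner_mem_rayPairs (R := (mult θ (π / 2) + 3) / 4) (edgeAngle_mem hθ)
    (Fintype.equivFin (ZigEdge θ) ⟨v, x.1⟩).is_lt x.2
  rw [edgeAngle_equivFin] at this
  exact rayPairs_mono (by simp [realisingPts]) _ this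

lemma mult_le_encard_rayPairs_of_ne_pi_div_two (hθ : ∀ i, θ i ∈ Set.Ioo 0 π) {F : Finset ℝ²}
    (hF : ∀ v ∈ oddValues θ, ∃ x : ℝ,
      horizCorner !₂[x, -1] 1 (cos v) (sin v) ∈ rayPairs ↑(fanBase ∪ F) v)
    {v : ℝ} (hv : v ≠ π / 2) :
    (mult θ v : ℕ∞) ≤ (rayPairs (realisingPts θ F : Set ℝ²) v).encard := by
  by_cases hvo : v ∉ ordinaryValues θ
  · simp [mult_eq_zero hvo hv]
  rw [not_not] at hvo
  have hf := edgeCorner_injective hθ ⟨v, hvo⟩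
  have hmem := edgeCorner_mem_rayPairs hθ F ⟨v, hvo⟩
  rcases Nat.even_or_odd (mult θ v) with he | ho
  · calc (mult θ v : ℕ∞) = Fintype.card (Fin (mult θ v / 2) × Bool) := by
          simp only [Fintype.card_prod, Fintype.card_fin, Fintype.card_bool]
          norm_cast
          exact (Nat.div_mul_cancel (even_iff_two_dvd.1 he)).symm
      _ ≤ _ := card_le_encard_rayPairs hf hmem
  obtain ⟨x, hx⟩ := hF v (by simp [oddValues, hvo, ho])
  have hsin := (mem_ordinaryValues hθ hvo).1
  replace hsin := sin_pos_of_pos_of_lt_pi hsin.1 hsin.2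
  let g (o : Option (Fin (mult θ v / 2) × Bool)) : Set (ℝ² × ℝ²) :=
    o.elim (horizCorner !₂[x, -1] 1 (cos v) (sin v)) (edgeCorner θ ⟨v, hvo⟩)
  have hg : Function.Injective g := by
    rintro (_ | a) (_ | b) hab
    · rfl
    · exact absurd hab.symm (zigCorner_ne_horizCorner _ _ hsin.ne')
    · exact absurd hab (zigCorner_ne_horizCorner _ _ hsin.ne')
    · exact congrArg some (hf hab)
  calc (mult θ v : ℕ∞) = Fintype.card (Option (Fin (mult θ v / 2) × Bool)) := by
        simp only [Fintype.card_option, Fintype.card_prod, Fintype.card_fin, Fintype.card_bool]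
        norm_cast
        have := Nat.odd_iff.1 ho
        omega
    _ ≤ _ := card_le_encard_rayPairs hg fun o => o.rec
        (rayPairs_mono (by simp [realisingPts]) _ hx) hmem

lemma mult_pi_div_two_le_encard_rayPairs (F : Finset ℝ²) :
    (mult θ (π / 2) : ℕ∞) ≤ (rayPairs (realisingPts θ F : Set ℝ²) (π / 2)).encard := by
  set R := (mult θ (π / 2) + 3) / 4
  let f (x : Fin R × Bool × Bool) : Set (ℝ² × ℝ²) :=
    rungCorner (edgeAngle θ) (Fintype.card (ZigEdge θ)) x.1 x.2.1 x.2.2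
  have hf : Function.Injective f := fun x y hxy => by
    have := rungCorner_injOn (x₁ := (x.1, x.2)) (x₂ := (y.1, y.2)) x.1.is_lt y.1.is_lt hxy
    simp only [Prod.mk.injEq, Fin.val_inj] at this
    exact Prod.ext this.1 this.2
  calc (mult θ (π / 2) : ℕ∞) ≤ Fintype.card (Fin R × Bool × Bool) := by
        simp only [Fintype.card_prod, Fintype.card_fin, Fintype.card_bool]
        norm_cast
        omega
    _ ≤ _ := card_le_encard_rayPairs hf fun x =>
        rayPairs_mono (Finset.coe_subset.2 Finset.subset_union_left) _
          (rungCorner_mem_rayPairs x.1.is_lt _ _)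

lemma mult_add_card_zigEdge_add_card_oddValues :
    mult θ (π / 2) + 2 * Fintype.card (ZigEdge θ) + (oddValues θ).card = n := by
  have hzig : Fintype.card (ZigEdge θ) = ∑ v ∈ ordinaryValues θ, mult θ v / 2 := by
    simp [Finset.sum_attach (ordinaryValues θ) fun v => mult θ v / 2]
  have hodd : (oddValues θ).card = ∑ v ∈ ordinaryValues θ, mult θ v % 2 := by
    rw [oddValues, Finset.card_filter]
    refine Finset.sum_congr rfl fun v _ => ?_
    rcases Nat.even_or_odd (mult θ v) with h | h
    · simp [Nat.even_iff.1 h, Nat.not_odd_iff_even.2 h]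
    · simp [Nat.odd_iff.1 h, h]
  have hfib : (Finset.univ.filter (θ · ≠ π / 2)).card = ∑ v ∈ ordinaryValues θ, mult θ v := by
    rw [Finset.card_eq_sum_card_image θ]
    refine Finset.sum_congr rfl fun v hv => ?_
    rw [mult, Finset.filter_filter]
    congr 1
    ext i
    simp only [Finset.mem_filter, Finset.mem_univ, true_and, and_iff_right_iff_imp]
    rintro rfl
    exact ne_of_mem_ordinaryValues hv
  have hsplit := Finset.card_filter_add_card_filter_not (s := Finset.univ) (p := (θ · = π / 2))
  rw [Finset.card_univ, Fintype.card_fin] at hsplit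
  rw [hzig, hodd, Finset.mul_sum, add_assoc, ← Finset.sum_add_distrib]
  simp only [Nat.div_add_mod]
  rw [← hfib, mult]
  exact hsplit

lemma card_realisingPts {F : Finset ℝ²} (hF : 2 * F.card ≤ (oddValues θ).card + 1) :
    2 * (realisingPts θ F).card ≤ n + 20 := by
  have hcount := mult_add_card_zigEdge_add_card_oddValues (θ := θ)
  have htwo := card_twoLinePts (w := edgeAngle θ) (K := Fintype.card (ZigEdge θ))
    (R := (mult θ (π / 2) + 3) / 4)
  have hbase : fanBase.card ≤ 3 := Finset.card_le_three
  grw [realisingPts, Finset.card_union_le, Finset.card_union_le]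
  omega

theorem exists_finset_realisesMult (hθ : ∀ i, θ i ∈ Set.Ioo 0 π) :
    ∃ P : Finset ℝ², 2 * P.card ≤ n + 20 ∧ RealisesMult (P : Set ℝ²) θ := by
  obtain ⟨F, hF, hfan⟩ := exists_fan (oddValues θ) fun v hv =>
    (mem_ordinaryValues hθ (Finset.mem_filter.1 hv).1).1
  refine ⟨realisingPts θ F, card_realisingPts hF, realisesMult_of_encard_le fun v => ?_⟩
  rw [encard_eq_mult]
  obtain rfl | hv := eq_or_ne v (π / 2)
  · exact mult_pi_div_two_le_encard_rayPairs F
  · exact mult_le_encard_rayPairs_of_ne_pi_div_two hθ hfan hv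

end Construction

/-- if `m ≥ n/2 + 30`, then any `n` (not necessarily distinct)
angles in `(0, π)` can be realised with multiplicity by `m` points in the
plane. -/
theorem statement7 (n m : ℕ) (hm : (n : ℝ) / 2 + 30 ≤ (m : ℝ))
    (θ : Fin n → ℝ) (hθ : ∀ i, θ i ∈ Set.Ioo 0 Real.pi) :
    ∃ P : Finset (EuclideanSpace ℝ (Fin 2)), P.card = m ∧
      RealisesMult (P : Set (EuclideanSpace ℝ (Fin 2))) θ := by
  obtain ⟨P₀, hP₀, hreal⟩ := exists_finset_realisesMult hθ
  have hnm : n + 60 ≤ 2 * m := by exact_mod_cast (by linarith : (n : ℝ) + 60 ≤ 2 * m)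
  obtain ⟨P, hsub, hcard⟩ := Infinite.exists_superset_card_eq P₀ m (by omega)
  exact ⟨P, hcard, hreal.mono (Finset.coe_subset.2 hsub)⟩
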